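/- arXiv:1702.08239 — 2 statements merged into one kernel-verified Lean document; each statement's English description precedes it below -/
import Mathlib

section
/- Under the same assumptions (α ∈ (0,1), C_n → ∞, C_n^α/n → 0, W_{n,1},...,W_{n,n} i.i.d. with truncated BFRY density f_n), for every integer s ≥ 2, the ratio M_{s,n} = (∑_{i=1}^n W_{n,i}^s) / (∑_{i=1}^n W_{n,i})^s converges to 0 in probability as n → ∞. -/
open MeasureTheory ProbabilityTheory Real Set Filter

/-- The truncated BFRY distribution on `(0, Cn]` with discount parameter `α`. -/
noncomputable def truncBFRY (α Cn : ℝ) : Measure ℝ :=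
  volume.withDensity (fun w => ENNReal.ofReal
    (Set.indicator (Ioc (0:ℝ) Cn)
      (fun w => (∫ u in Ioc (0:ℝ) Cn, u ^ (-α - 1) * (1 - Real.exp (-u)))⁻¹ *
        w ^ (-α - 1) * (1 - Real.exp (-w))) w))

open Topology

/-!
For weights in `[0, c]` with sum `S > 0`, each `w ^ s ≤ min c S ^ (s - 1) * w`, so
`M_s ≤ (min c S / S) ^ (s - 1) ≤ c / S`: a ratio `M_{s,n} ≥ ε` forces `∑ᵢ W_{n,i} ≤ C_n / ε`.
The truncated BFRY mean `m_n` is at least a constant times `C_n ^ (1 - α)`, so `C_n / ε` is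
eventually below half the expected sum `n m_n`. Chebyshev's inequality, with the Bhatia–Davis
bound `Var W ≤ C_n m_n`, then bounds the probability by `4 C_n / (n m_n) = O(C_n ^ α / n) → 0`.
-/

section MomentRatio

variable {ι : Type*} [Fintype ι]

noncomputable def momentRatio (s : ℕ) (w : ι → ℝ) : ℝ := (∑ i, w i ^ s) / (∑ i, w i) ^ s

lemma momentRatio_nonneg (s : ℕ) {w : ι → ℝ} (hw : ∀ i, 0 ≤ w i) : 0 ≤ momentRatio s w :=
  div_nonneg (Finset.sum_nonneg fun i _ => pow_nonneg (hw i) s)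
    (pow_nonneg (Finset.sum_nonneg fun i _ => hw i) s)

lemma momentRatio_le_div_sum {s : ℕ} (hs : 2 ≤ s) {w : ι → ℝ} {c : ℝ}
    (hw : ∀ i, w i ∈ Icc 0 c) : momentRatio s w ≤ c / ∑ i, w i := by
  obtain ⟨k, rfl⟩ : ∃ k, s = k + 1 + 1 := ⟨s - 2, by omega⟩
  set S := ∑ i, w i
  rcases (Finset.sum_nonneg fun i _ => (hw i).1 : 0 ≤ S).eq_or_lt with hS | hS
  · simp [momentRatio, S, ← hS]
  set b := min c S
  have hwb : ∀ i, w i ≤ b := fun i =>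
    le_min (hw i).2 (Finset.single_le_sum (fun j _ => (hw j).1) (Finset.mem_univ i))
  obtain ⟨i₀, -, -⟩ := Finset.exists_ne_zero_of_sum_ne_zero hS.ne'
  have hbS : b / S ≤ 1 := div_le_one_of_le₀ (min_le_right c S) hS.le
  have hsum : ∑ i, w i ^ (k + 1 + 1) ≤ b ^ (k + 1) * S := by
    rw [Finset.mul_sum]
    refine Finset.sum_le_sum fun i _ => ?_
    rw [pow_succ]
    exact mul_le_mul_of_nonneg_right (pow_le_pow_left₀ (hw i).1 (hwb i) _) (hw i).1
  calc momentRatio (k + 1 + 1) w ≤ b ^ (k + 1) * S / S ^ (k + 1 + 1) :=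
        div_le_div_of_nonneg_right hsum (by positivity)
    _ = (b / S) ^ (k + 1) := by rw [div_pow, pow_succ S, mul_div_mul_right _ _ hS.ne']
    _ ≤ b / S := pow_le_of_le_one (div_nonneg ((hw i₀).1.trans (hwb i₀)) hS.le) hbS (by omega)
    _ ≤ c / S := div_le_div_of_nonneg_right (min_le_left c S) hS.le

end MomentRatio

section Chebyshev

variable {Ω ι : Type*} [MeasurableSpace Ω] {μ : Measure Ω} [Fintype ι] [Nonempty ι]
  {X : ι → Ω → ℝ}

lemma measure_sum_le_half_mean_le [IsFiniteMeasure μ] {m v : ℝ} (hL2 : ∀ i, MemLp (X i) 2 μ)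
    (hindep : Pairwise fun i j => IndepFun (X i) (X j) μ) (hmean : ∀ i, μ[X i] = m)
    (hvar : ∀ i, variance (X i) μ ≤ v) (hm : 0 < m) :
    μ {ω | ∑ i, X i ω ≤ Fintype.card ι * m / 2}
      ≤ ENNReal.ofReal (4 * v / (Fintype.card ι * m ^ 2)) := by
  set n : ℝ := (Fintype.card ι : ℝ)
  have hn : 0 < n := Nat.cast_pos.2 Fintype.card_pos
  have hsum_mean : μ[∑ i, X i] = n * m := by
    simp [integral_finsetSum _ fun i _ => (hL2 i).integrable one_le_two, hmean, n]
  have hsum_var : variance (∑ i, X i) μ ≤ n * v := by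
    rw [IndepFun.variance_sum (fun i _ => hL2 i) fun i _ j _ hij => hindep hij]
    simpa [n] using Finset.sum_le_sum fun i (_ : i ∈ Finset.univ) => hvar i
  calc μ {ω | ∑ i, X i ω ≤ n * m / 2}
      ≤ μ {ω | n * m / 2 ≤ |(∑ i, X i) ω - μ[∑ i, X i]|} := by
        refine measure_mono fun ω (hω : ∑ i, X i ω ≤ n * m / 2) => ?_
        change n * m / 2 ≤ |(∑ i, X i) ω - μ[∑ i, X i]|
        rw [hsum_mean, Finset.sum_apply, abs_sub_comm,
          abs_of_nonneg (by linarith [mul_pos hn hm])]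
        linarith
    _ ≤ ENNReal.ofReal (variance (∑ i, X i) μ / (n * m / 2) ^ 2) :=
        meas_ge_le_variance_div_sq (memLp_finsetSum' _ fun i _ => hL2 i) (by positivity)
    _ ≤ ENNReal.ofReal (4 * v / (n * m ^ 2)) := by
        refine ENNReal.ofReal_le_ofReal ?_
        calc variance (∑ i, X i) μ / (n * m / 2) ^ 2 ≤ n * v / (n * m / 2) ^ 2 := by gcongr
          _ = 4 * v / (n * m ^ 2) := by field_simp; ring

lemma measure_le_abs_momentRatio_le [IsProbabilityMeasure μ] {c m ε : ℝ} {s : ℕ}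
    (hmeas : ∀ i, AEMeasurable (X i) μ) (hbdd : ∀ i, ∀ᵐ ω ∂μ, X i ω ∈ Icc 0 c)
    (hindep : Pairwise fun i j => IndepFun (X i) (X j) μ) (hmean : ∀ i, μ[X i] = m)
    (hm : 0 < m) (hs : 2 ≤ s) (hε : 0 < ε) (hc : c / (Fintype.card ι * m) ≤ ε / 2) :
    μ {ω | ε ≤ |momentRatio s fun i => X i ω|}
      ≤ ENNReal.ofReal (4 * (c / (Fintype.card ι * m))) := by
  have hn : (0 : ℝ) < Fintype.card ι := Nat.cast_pos.2 Fintype.card_pos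
  have hsub : {ω | ε ≤ |momentRatio s fun i => X i ω|}
      ≤ᵐ[μ] {ω | ∑ i, X i ω ≤ Fintype.card ι * m / 2} := by
    filter_upwards [ae_all_iff.2 hbdd] with ω hω (hε_le : ε ≤ |momentRatio s fun i => X i ω|)
    rw [abs_of_nonneg (momentRatio_nonneg s fun i => (hω i).1)] at hε_le
    have hle := hε_le.trans (momentRatio_le_div_sum hs hω)
    have hS : 0 < ∑ i, X i ω := by
      rcases (Finset.sum_nonneg fun i _ => (hω i).1 : 0 ≤ ∑ i, X i ω).eq_or_lt with h | h
      · rw [← h, div_zero] at hle; linarith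
      · exact h
    have hεS : ε * ∑ i, X i ω ≤ c := (le_div_iff₀ hS).1 hle
    have hcε : c ≤ ε / 2 * (Fintype.card ι * m) := (div_le_iff₀ (by positivity)).1 hc
    exact le_of_mul_le_mul_left
      (by linarith : ε * ∑ i, X i ω ≤ ε * (Fintype.card ι * m / 2)) hε
  have hvar : ∀ i, variance (X i) μ ≤ c * m := fun i => by
    have := variance_le_sub_mul_sub (hbdd i) (hmeas i)
    rw [hmean i] at this
    nlinarith
  calc μ {ω | ε ≤ |momentRatio s fun i => X i ω|}
      ≤ μ {ω | ∑ i, X i ω ≤ Fintype.card ι * m / 2} := measure_mono_ae hsub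
    _ ≤ ENNReal.ofReal (4 * (c * m) / (Fintype.card ι * m ^ 2)) :=
        measure_sum_le_half_mean_le
          (fun i => memLp_of_bounded (hbdd i) (hmeas i).aestronglyMeasurable 2) hindep hmean hvar hm
    _ = ENNReal.ofReal (4 * (c / (Fintype.card ι * m))) := by
        congr 1; field_simp

end Chebyshev

noncomputable def truncBFRYNormalizer (α C : ℝ) : ℝ :=
  ∫ u in Ioc (0:ℝ) C, u ^ (-α - 1) * (1 - Real.exp (-u))

lemma one_sub_exp_neg_nonneg {u : ℝ} (hu : 0 ≤ u) : 0 ≤ 1 - Real.exp (-u) := by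
  simpa using Real.exp_le_one_iff.2 (neg_nonpos.2 hu)

lemma rpow_mul_one_sub_exp_neg_le {u : ℝ} (hu : 0 < u) (r : ℝ) :
    u ^ r * (1 - Real.exp (-u)) ≤ u ^ (r + 1) := by
  rw [rpow_add_one hu.ne']
  exact mul_le_mul_of_nonneg_left (by linarith [Real.one_sub_le_exp_neg u]) (rpow_nonneg hu.le r)

lemma intervalIntegrable_rpow_mul_one_sub_exp_neg {r a b : ℝ} (hr : -2 < r) (ha : 0 ≤ a)
    (hab : a ≤ b) :
    IntervalIntegrable (fun u : ℝ => u ^ r * (1 - Real.exp (-u))) volume a b := by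
  rw [intervalIntegrable_iff_integrableOn_Ioc_of_le hab]
  refine (intervalIntegral.intervalIntegrable_rpow' (r := r + 1) (by linarith)).1.mono'
    (by fun_prop) ?_
  filter_upwards [ae_restrict_mem measurableSet_Ioc] with u hu
  have hu0 : 0 < u := ha.trans_lt hu.1
  rw [Real.norm_of_nonneg (mul_nonneg (rpow_nonneg hu0.le r) (one_sub_exp_neg_nonneg hu0.le))]
  exact rpow_mul_one_sub_exp_neg_le hu0 r

lemma ae_mem_Ioc_truncBFRY (α C : ℝ) : ∀ᵐ w ∂truncBFRY α C, w ∈ Ioc 0 C := by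
  rw [truncBFRY,
    ae_withDensity_iff (Measurable.indicator (by fun_prop) measurableSet_Ioc).ennreal_ofReal]
  refine ae_of_all _ fun w hw => ?_
  by_contra h
  simp [indicator_of_notMem h] at hw

lemma integral_truncBFRY (α C : ℝ) (g : ℝ → ℝ) :
    ∫ w, g w ∂truncBFRY α C = (truncBFRYNormalizer α C)⁻¹ *
      ∫ w in Ioc 0 C, w ^ (-α - 1) * (1 - Real.exp (-w)) * g w := by
  set f : ℝ → ℝ := (Ioc 0 C).indicator
    fun w => (truncBFRYNormalizer α C)⁻¹ * w ^ (-α - 1) * (1 - Real.exp (-w))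
  have hZ : 0 ≤ truncBFRYNormalizer α C := setIntegral_nonneg measurableSet_Ioc fun u hu =>
    mul_nonneg (rpow_nonneg hu.1.le _) (one_sub_exp_neg_nonneg hu.1.le)
  have hf : ∀ w, 0 ≤ f w := fun w => indicator_nonneg (fun u hu =>
    mul_nonneg (mul_nonneg (inv_nonneg.2 hZ) (rpow_nonneg hu.1.le _))
      (one_sub_exp_neg_nonneg hu.1.le)) w
  have hf_meas : Measurable fun w => (f w).toNNReal :=
    (Measurable.indicator (by fun_prop) measurableSet_Ioc).real_toNNReal
  -- `ENNReal.ofReal x` is `↑x.toNNReal` by definition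
  change ∫ w, g w ∂volume.withDensity (fun w => ((f w).toNNReal : ENNReal)) = _
  rw [integral_withDensity_eq_integral_smul hf_meas, ← integral_const_mul,
    ← integral_indicator measurableSet_Ioc]
  refine integral_congr_ae (ae_of_all _ fun w => ?_)
  simp only [NNReal.smul_def, Real.coe_toNNReal _ (hf w), smul_eq_mul, f]
  by_cases hw : w ∈ Ioc 0 C <;> simp [hw, mul_assoc]

section Normalizer

variable {α C : ℝ}

lemma truncBFRYNormalizer_pos (hα1 : α < 1) (hC : 0 < C) : 0 < truncBFRYNormalizer α C := by
  rw [truncBFRYNormalizer, ← intervalIntegral.integral_of_le hC.le]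
  refine intervalIntegral.intervalIntegral_pos_of_pos_on
    (intervalIntegrable_rpow_mul_one_sub_exp_neg (by linarith) le_rfl hC.le) (fun u hu => ?_) hC
  exact mul_pos (rpow_pos_of_pos hu.1 _)
    (sub_pos.2 (Real.exp_lt_one_iff.2 (neg_lt_zero.2 hu.1)))

lemma truncBFRYNormalizer_le (hα0 : 0 < α) (hα1 : α < 1) (hC : 1 ≤ C) :
    truncBFRYNormalizer α C ≤ (α * (1 - α))⁻¹ := by
  have h01 : IntervalIntegrable (fun u : ℝ => u ^ (-α - 1) * (1 - Real.exp (-u))) volume 0 1 :=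
    intervalIntegrable_rpow_mul_one_sub_exp_neg (by linarith) le_rfl zero_le_one
  have h1C : IntervalIntegrable (fun u : ℝ => u ^ (-α - 1) * (1 - Real.exp (-u))) volume 1 C :=
    intervalIntegrable_rpow_mul_one_sub_exp_neg (by linarith) zero_le_one hC
  -- near `0` the kernel is at most `u ^ (-α)`, near `∞` at most `u ^ (-α - 1)`
  have hnear : ∫ u in (0)..1, u ^ (-α - 1) * (1 - Real.exp (-u)) ≤ (1 - α)⁻¹ := by
    calc _ ≤ ∫ u in (0)..1, u ^ (-α) :=
          intervalIntegral.integral_mono_on_of_le_Ioo zero_le_one h01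
            (intervalIntegral.intervalIntegrable_rpow' (by linarith)) fun u hu => by
              simpa using rpow_mul_one_sub_exp_neg_le hu.1 (-α - 1)
      _ = (1 - α)⁻¹ := by
          rw [integral_rpow (Or.inl (by linarith)), zero_rpow (by linarith)]
          simp [show -α + 1 = 1 - α by ring]
  have hfar : ∫ u in (1)..C, u ^ (-α - 1) * (1 - Real.exp (-u)) ≤ α⁻¹ := by
    have h0 : (0:ℝ) ∉ uIcc 1 C := fun h => by rw [uIcc_of_le hC] at h; linarith [h.1]
    calc _ ≤ ∫ u in (1)..C, u ^ (-α - 1) :=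
          intervalIntegral.integral_mono_on_of_le_Ioo hC h1C
            (intervalIntegral.intervalIntegrable_rpow (Or.inr h0)) fun u hu =>
              mul_le_of_le_one_right (rpow_nonneg (by linarith [hu.1]) _)
                (by linarith [Real.exp_pos (-u)])
      _ = (1 - C ^ (-α)) / α := by
          rw [integral_rpow (Or.inr ⟨by linarith, h0⟩), show -α - 1 + 1 = -α by ring, one_rpow,
            div_eq_div_iff (neg_ne_zero.2 hα0.ne') hα0.ne']
          ring
      _ ≤ α⁻¹ := by
          rw [div_le_iff₀ hα0, inv_mul_cancel₀ hα0.ne']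
          linarith [rpow_nonneg (zero_le_one.trans hC) (-α)]
  rw [truncBFRYNormalizer, ← intervalIntegral.integral_of_le (zero_le_one.trans hC),
    ← intervalIntegral.integral_add_adjacent_intervals h01 h1C]
  calc _ ≤ (1 - α)⁻¹ + α⁻¹ := add_le_add hnear hfar
    _ = (α * (1 - α))⁻¹ := by
        have : 1 - α ≠ 0 := (sub_pos.2 hα1).ne'
        field_simp
        ring

end Normalizer

section Mean

variable {α : ℝ}

lemma le_integral_id_truncBFRY (hα0 : 0 < α) (hα1 : α < 1) {C : ℝ} (hC : 1 ≤ C) :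
    α * (1 - Real.exp (-1)) * (C ^ (1 - α) - 1) ≤ ∫ w, w ∂truncBFRY α C := by
  have hZ : α * (1 - α) ≤ (truncBFRYNormalizer α C)⁻¹ :=
    (le_inv_comm₀ (mul_pos hα0 (sub_pos.2 hα1)) (truncBFRYNormalizer_pos hα1 (by linarith))).2
      (truncBFRYNormalizer_le hα0 hα1 hC)
  have hexp : 0 ≤ 1 - Real.exp (-1) := one_sub_exp_neg_nonneg zero_le_one
  have hCα : 0 ≤ C ^ (1 - α) - 1 := sub_nonneg.2 (one_le_rpow hC (by linarith))
  have h01 : IntervalIntegrable (fun u : ℝ => u ^ (-α) * (1 - Real.exp (-u))) volume 0 1 :=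
    intervalIntegrable_rpow_mul_one_sub_exp_neg (by linarith) le_rfl zero_le_one
  have h1C : IntervalIntegrable (fun u : ℝ => u ^ (-α) * (1 - Real.exp (-u))) volume 1 C :=
    intervalIntegrable_rpow_mul_one_sub_exp_neg (by linarith) zero_le_one hC
  -- only the part of the integral over `[1, C]`, where `1 - exp (-w) ≥ 1 - exp (-1)`, is kept
  have hN : (1 - Real.exp (-1)) * ((C ^ (1 - α) - 1) / (1 - α))
      ≤ ∫ w in Ioc 0 C, w ^ (-α - 1) * (1 - Real.exp (-w)) * w := by
    rw [setIntegral_congr_fun measurableSet_Ioc fun w hw => by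
        rw [mul_right_comm, ← rpow_add_one hw.1.ne', sub_add_cancel],
      ← intervalIntegral.integral_of_le (zero_le_one.trans hC),
      ← intervalIntegral.integral_add_adjacent_intervals h01 h1C]
    calc _ = ∫ u in (1)..C, (1 - Real.exp (-1)) * u ^ (-α) := by
          rw [intervalIntegral.integral_const_mul, integral_rpow (Or.inl (by linarith)), one_rpow,
            show -α + 1 = 1 - α by ring]
      _ ≤ ∫ u in (1)..C, u ^ (-α) * (1 - Real.exp (-u)) :=
          intervalIntegral.integral_mono_on hC
            ((intervalIntegral.intervalIntegrable_rpow' (by linarith)).const_mul _) h1C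
            fun u hu => by
              rw [mul_comm]
              exact mul_le_mul_of_nonneg_left (by gcongr; linarith [hu.1])
                (rpow_nonneg (by linarith [hu.1]) _)
      _ ≤ _ := le_add_of_nonneg_left <| intervalIntegral.integral_nonneg zero_le_one fun u hu =>
          mul_nonneg (rpow_nonneg hu.1 _) (one_sub_exp_neg_nonneg hu.1)
  rw [integral_truncBFRY]
  calc α * (1 - Real.exp (-1)) * (C ^ (1 - α) - 1)
      = α * (1 - α) * ((1 - Real.exp (-1)) * ((C ^ (1 - α) - 1) / (1 - α))) := by
        have : 1 - α ≠ 0 := (sub_pos.2 hα1).ne'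
        field_simp
    _ ≤ _ := mul_le_mul hZ (by simpa using hN) (by positivity) (hZ.trans' (by nlinarith))

lemma integral_id_truncBFRY_pos (hα0 : 0 < α) (hα1 : α < 1) {C : ℝ} (hC : 1 < C) :
    0 < ∫ w, w ∂truncBFRY α C :=
  (le_integral_id_truncBFRY hα0 hα1 hC.le).trans_lt' <|
    mul_pos (mul_pos hα0 (sub_pos.2 (Real.exp_lt_one_iff.2 (by norm_num))))
      (sub_pos.2 (one_lt_rpow hC (by linarith)))

lemma tendsto_div_natCast_mul_integral_id_truncBFRY (hα0 : 0 < α) (hα1 : α < 1)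
    {C : ℕ → ℝ} (hC : Tendsto C atTop atTop)
    (hCn : Tendsto (fun n => C n ^ α / (n : ℝ)) atTop (𝓝 0)) :
    Tendsto (fun n => C n / (n * ∫ w, w ∂truncBFRY α (C n))) atTop (𝓝 0) := by
  have hexp : 0 < 1 - Real.exp (-1) := sub_pos.2 (Real.exp_lt_one_iff.2 (by norm_num))
  set κ := α * (1 - Real.exp (-1)) / 2 with hκ_def
  have hκ : 0 < κ := by positivity
  have hpow : ∀ᶠ n in atTop, 2 ≤ C n ^ (1 - α) :=
    ((tendsto_rpow_atTop (by linarith)).comp hC).eventually_ge_atTop 2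
  have hbound :
      ∀ᶠ n in atTop, C n / (n * ∫ w, w ∂truncBFRY α (C n)) ≤ κ⁻¹ * (C n ^ α / n) := by
    filter_upwards [hC.eventually_ge_atTop 1, hpow, eventually_ge_atTop 1] with n hC1 hC2 hn
    have hn' : (0 : ℝ) < n := by exact_mod_cast hn
    have hmean : κ * C n ^ (1 - α) ≤ ∫ w, w ∂truncBFRY α (C n) := by
      refine le_trans ?_ (le_integral_id_truncBFRY hα0 hα1 hC1)
      nlinarith [mul_pos hα0 hexp, hκ_def]
    calc C n / (n * ∫ w, w ∂truncBFRY α (C n)) ≤ C n / (n * (κ * C n ^ (1 - α))) := by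
          gcongr
      _ = κ⁻¹ * (C n ^ α / n) := by
          nth_rw 1 [← rpow_one (C n), ← add_sub_cancel α 1, rpow_add (by linarith)]
          field_simp
  have hnonneg : ∀ᶠ n in atTop, 0 ≤ C n / (n * ∫ w, w ∂truncBFRY α (C n)) := by
    filter_upwards [hC.eventually_gt_atTop 1] with n hC1
    exact div_nonneg (by linarith)
      (mul_nonneg n.cast_nonneg (integral_id_truncBFRY_pos hα0 hα1 hC1).le)
  exact tendsto_of_tendsto_of_tendsto_of_le_of_le' tendsto_const_nhds
    (by simpa using hCn.const_mul κ⁻¹) hnonneg hbound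

end Mean

theorem moment_ratio_tendsto_zero_in_probability_general (α : ℝ) (hα0 : 0 < α) (hα1 : α < 1)
    (C : ℕ → ℝ)
    (hC : Tendsto C atTop atTop)
    (hCn : Tendsto (fun n => C n ^ α / (n : ℝ)) atTop (nhds 0))
    (s : ℕ) (hs : 2 ≤ s)
    {Ω : Type*} [MeasureSpace Ω] [IsProbabilityMeasure (volume : Measure Ω)]
    (W : (n : ℕ) → Fin n → Ω → ℝ)
    (hmeas : ∀ n i, Measurable (W n i))
    (hindep : ∀ n, iIndepFun (W n) volume)
    (hlaw : ∀ n i, Measure.map (W n i) volume = truncBFRY α (C n)) :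
    ∀ ε > 0,
      Tendsto (fun n : ℕ => (volume : Measure Ω)
          {ω | ε ≤ |(∑ i : Fin n, W n i ω ^ s) / (∑ i : Fin n, W n i ω) ^ s|})
        atTop (nhds 0) := by
  intro ε hε
  have hratio := tendsto_div_natCast_mul_integral_id_truncBFRY hα0 hα1 hC hCn
  have hbound : ∀ᶠ n in atTop, (volume : Measure Ω)
      {ω | ε ≤ |momentRatio s fun i => W n i ω|}
        ≤ ENNReal.ofReal (4 * (C n / (n * ∫ w, w ∂truncBFRY α (C n)))) := by
    filter_upwards [eventually_ge_atTop 1, hC.eventually_gt_atTop 1,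
      hratio.eventually (eventually_le_nhds (half_pos hε))] with n hn hC1 hsmall
    have : Nonempty (Fin n) := ⟨⟨0, hn⟩⟩
    have hmean : ∀ i, ∫ ω, W n i ω = ∫ w, w ∂truncBFRY α (C n) := fun i => by
      rw [← hlaw n i]
      exact (integral_map (hmeas n i).aemeasurable aestronglyMeasurable_id).symm
    have hbdd : ∀ i, ∀ᵐ ω, W n i ω ∈ Icc 0 (C n) := fun i =>
      ae_of_ae_map (hmeas n i).aemeasurable <| by
        rw [hlaw n i]
        exact (ae_mem_Ioc_truncBFRY α (C n)).mono fun w hw => Ioc_subset_Icc_self hw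
    have key := measure_le_abs_momentRatio_le (fun i => (hmeas n i).aemeasurable) hbdd
      (fun i j hij => (hindep n).indepFun hij) hmean (integral_id_truncBFRY_pos hα0 hα1 hC1)
      hs hε (by rwa [Fintype.card_fin])
    rwa [Fintype.card_fin] at key
  exact tendsto_of_tendsto_of_tendsto_of_le_of_le' tendsto_const_nhds
    (by simpa using ENNReal.tendsto_ofReal (hratio.const_mul 4))
    (Eventually.of_forall fun _ => zero_le) hbound

/-- For i.i.d. truncated BFRY weights `W_{n,1},…,W_{n,n}` and integer `s ≥ 2`, the
ratio `M_{s,n} = (∑ᵢ W_{n,i}^s)/(∑ᵢ W_{n,i})^s` converges to `0` in probability. -/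
theorem moment_ratio_tendsto_zero_in_probability (α : ℝ) (hα0 : 0 < α) (hα1 : α < 1)
    (C : ℕ → ℝ) (hCpos : ∀ n, 0 < C n)
    (hC : Tendsto C atTop atTop)
    (hCn : Tendsto (fun n => C n ^ α / (n : ℝ)) atTop (nhds 0))
    (s : ℕ) (hs : 2 ≤ s)
    {Ω : Type*} [MeasureSpace Ω] [IsProbabilityMeasure (volume : Measure Ω)]
    (W : (n : ℕ) → Fin n → Ω → ℝ)
    (hmeas : ∀ n i, Measurable (W n i))
    (hindep : ∀ n, iIndepFun (W n) volume)
    (hlaw : ∀ n i, Measure.map (W n i) volume = truncBFRY α (C n)) :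
    ∀ ε > 0,
      Tendsto (fun n : ℕ => (volume : Measure Ω)
          {ω | ε ≤ |(∑ i : Fin n, W n i ω ^ s) / (∑ i : Fin n, W n i ω) ^ s|})
        atTop (nhds 0) :=
  moment_ratio_tendsto_zero_in_probability_general α hα0 hα1 C hC hCn s hs W hmeas hindep hlaw
end

section
/- Under the truncated BFRY setup (α ∈ (0,1), C_n → ∞, C_n^α/n → 0, W_{n,i} i.i.d. with density f_n), fix w > 0. Then the conditional PGF F_n(t; w) = ∏_{i=1}^{n-1} (L_n + w + t·w·W_{n,i})/(L_n + w + w·W_{n,i}), where L_n = ∑_{i=1}^{n-1} W_{n,i}, converges in probability to exp{(t-1)w} as n → ∞, for every fixed t with |t| ≤ 1. -/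
/-! Write `L = ∑ⱼ Vⱼ` and `rᵢ = w Vᵢ / (L + w + w Vᵢ)`. Each factor of the product is
`1 + (t - 1) rᵢ`, and once `w (1 + max Vᵢ) ≤ δ L` every `rᵢ` is at most `δ` while `∑ rᵢ`
is within `δ w` of `w`; comparing `∏ (1 + aᵢ)` with `∏ exp aᵢ` factor by factor then puts
the product within `6 w δ` of `exp ((t - 1) w)`.

For the truncated BFRY array the weights lie in `(0, Cₙ]` and the density is of order
`Cₙ^{-α-1}` on `(Cₙ / 2, Cₙ]`, so each mean is at least a constant times `Cₙ^{1-α}` and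
`E Lₙ / Cₙ ≳ n / Cₙ^α → ∞`. Since `Var Lₙ ≤ Cₙ E Lₙ`, Chebyshev gives `Lₙ > E Lₙ / 2`
outside an event of probability `O(Cₙ / E Lₙ)`, and on that event the deterministic bound
applies. -/

open MeasureTheory ProbabilityTheory Real Set Filter Finset

lemma abs_prod_sub_prod_le_sum_abs_sub {ι : Type*} (s : Finset ι) {a b : ι → ℝ}
    (ha : ∀ i ∈ s, |a i| ≤ 1) (hb : ∀ i ∈ s, |b i| ≤ 1) :
    |∏ i ∈ s, a i - ∏ i ∈ s, b i| ≤ ∑ i ∈ s, |a i - b i| := by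
  classical
  induction s using Finset.induction_on with
  | empty => simp
  | insert j s hj ih =>
    rw [Finset.forall_mem_insert] at ha hb
    have hbs : |∏ i ∈ s, b i| ≤ 1 := by
      rw [abs_prod]; exact prod_le_one (fun _ _ => abs_nonneg _) hb.2
    rw [prod_insert hj, prod_insert hj, sum_insert hj]
    calc |a j * ∏ i ∈ s, a i - b j * ∏ i ∈ s, b i|
        = |a j * (∏ i ∈ s, a i - ∏ i ∈ s, b i) + (a j - b j) * ∏ i ∈ s, b i| := by
          ring_nf
      _ ≤ |a j| * |∏ i ∈ s, a i - ∏ i ∈ s, b i| + |a j - b j| * |∏ i ∈ s, b i| := by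
        rw [← abs_mul, ← abs_mul]; exact abs_add_le _ _
      _ ≤ 1 * ∑ i ∈ s, |a i - b i| + |a j - b j| * 1 := by
        gcongr
        exacts [ha.1, ih ha.2 hb.2]
      _ = |a j - b j| + ∑ i ∈ s, |a i - b i| := by ring

lemma abs_exp_sub_exp_le_of_nonpos {x y : ℝ} (hx : x ≤ 0) (hy : y ≤ 0) :
    |exp x - exp y| ≤ |x - y| := by
  wlog hxy : y ≤ x generalizing x y
  · rw [abs_sub_comm, abs_sub_comm x]
    exact this hy hx (le_of_not_ge hxy)
  rw [abs_of_nonneg (sub_nonneg.2 (exp_le_exp.2 hxy)), abs_of_nonneg (sub_nonneg.2 hxy)]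
  have hfactor : exp x - exp y = exp x * (1 - exp (y - x)) := by
    rw [mul_sub, ← exp_add]; ring_nf
  have hexp_le : exp x ≤ 1 := exp_le_one_iff.2 hx
  have hgap : 1 - exp (y - x) ≤ x - y := by linarith [add_one_le_exp (y - x)]
  have hgap_nonneg : 0 ≤ 1 - exp (y - x) := by
    linarith [exp_le_one_iff.2 (sub_nonpos.2 hxy)]
  rw [hfactor]
  nlinarith [exp_pos x]

lemma abs_prod_one_add_sub_exp_sum_le {ι : Type*} (s : Finset ι) {a : ι → ℝ}
    (ha : ∀ i ∈ s, a i ∈ Icc (-1 : ℝ) 0) :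
    |∏ i ∈ s, (1 + a i) - exp (∑ i ∈ s, a i)| ≤ ∑ i ∈ s, a i ^ 2 := by
  rw [exp_sum]
  refine (abs_prod_sub_prod_le_sum_abs_sub s (fun i hi => ?_) (fun i hi => ?_)).trans
    (sum_le_sum fun i hi => ?_)
  · obtain ⟨h1, h2⟩ := ha i hi
    rw [abs_le]; constructor <;> linarith
  · rw [abs_of_pos (exp_pos _)]; exact exp_le_one_iff.2 (ha i hi).2
  · rw [abs_sub_comm, show exp (a i) - (1 + a i) = exp (a i) - 1 - a i by ring]
    obtain ⟨h1, h2⟩ := ha i hi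
    exact abs_exp_sub_one_sub_id_le (abs_le.2 ⟨h1, by linarith⟩)

noncomputable def condPGF {ι : Type*} [Fintype ι] (V : ι → ℝ) (w t : ℝ) : ℝ :=
  ∏ i, ((∑ j, V j) + w + t * w * V i) / ((∑ j, V j) + w + w * V i)

section PGFWeights

variable {ι : Type*} [Fintype ι] {V : ι → ℝ} {Cb w δ : ℝ}

lemma condPGF_eq_prod (hL : 0 < ∑ j, V j) (hV : ∀ i, 0 ≤ V i) (hw : 0 ≤ w) (t : ℝ) :
    condPGF V w t = ∏ i, (1 + (t - 1) * (w * V i / ((∑ j, V j) + w + w * V i))) := by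
  refine prod_congr rfl fun i _ => ?_
  have hD : 0 < (∑ j, V j) + w + w * V i := by have := hV i; positivity
  field_simp
  ring

lemma mul_div_sum_add_le (hV : ∀ i, V i ∈ Icc 0 Cb) (hL : 0 < ∑ j, V j) (hw : 0 ≤ w)
    (hδ : w * (1 + Cb) ≤ δ * ∑ j, V j) (i : ι) :
    w * V i / ((∑ j, V j) + w + w * V i) ≤ δ := by
  obtain ⟨hV0, hVC⟩ := hV i
  have hδ0 : 0 ≤ δ := by nlinarith [mul_nonneg hw (show 0 ≤ 1 + Cb by linarith)]
  rw [div_le_iff₀ (by positivity)]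
  nlinarith [mul_le_mul_of_nonneg_left hVC hw, mul_nonneg hδ0 (mul_nonneg hw hV0)]

lemma sum_mul_div_sum_add_mem_Icc (hV : ∀ i, V i ∈ Icc 0 Cb) (hL : 0 < ∑ j, V j)
    (hw : 0 ≤ w)
    (hδ : w * (1 + Cb) ≤ δ * ∑ j, V j) :
    ∑ i, w * V i / ((∑ j, V j) + w + w * V i) ∈ Icc (w - δ * w) w := by
  set L := ∑ j, V j
  have hgap : ∀ i, w * V i / L - w * V i / (L + w + w * V i)
      = w * V i / L * ((w + w * V i) / (L + w + w * V i)) := fun i => by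
    have : 0 < L + w + w * V i := by have := (hV i).1; positivity
    field_simp
    ring
  have hfrac : ∀ i, (w + w * V i) / (L + w + w * V i) ∈ Icc 0 δ := fun i => by
    obtain ⟨hV0, hVC⟩ := hV i
    have hδ0 : 0 ≤ δ := by nlinarith [mul_nonneg hw (show 0 ≤ 1 + Cb by linarith)]
    refine ⟨by positivity, (div_le_iff₀ (by positivity)).2 ?_⟩
    nlinarith [mul_le_mul_of_nonneg_left hVC hw, mul_nonneg hδ0 (mul_nonneg hw hV0)]
  have hsum : ∑ i, w * V i / L = w := by
    rw [← sum_div, ← mul_sum, mul_div_assoc, div_self hL.ne', mul_one]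
  have hlow : ∑ i, (w * V i / L - w * V i / (L + w + w * V i)) ≤ δ * w :=
    calc ∑ i, (w * V i / L - w * V i / (L + w + w * V i)) ≤ ∑ i, δ * (w * V i / L) :=
          sum_le_sum fun i _ => by
            rw [hgap, mul_comm δ]
            exact mul_le_mul_of_nonneg_left (hfrac i).2 (by have := (hV i).1; positivity)
      _ = δ * w := by rw [← mul_sum, hsum]
  have hup : 0 ≤ ∑ i, (w * V i / L - w * V i / (L + w + w * V i)) :=
    sum_nonneg fun i _ => by
      rw [hgap]; exact mul_nonneg (by have := (hV i).1; positivity) (hfrac i).1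
  rw [sum_sub_distrib, hsum] at hlow hup
  exact ⟨by linarith, by linarith⟩

lemma abs_condPGF_sub_exp_le (hV : ∀ i, V i ∈ Icc 0 Cb) (hL : 0 < ∑ j, V j) (hw : 0 ≤ w)
    {t : ℝ} (ht : |t| ≤ 1) (hδ : w * (1 + Cb) ≤ δ * ∑ j, V j) (hδ_le : δ ≤ 1 / 2) :
    |condPGF V w t - exp ((t - 1) * w)| ≤ 6 * w * δ := by
  set r : ι → ℝ := fun i => w * V i / ((∑ j, V j) + w + w * V i)
  have hr : ∀ i, r i ∈ Icc 0 δ := fun i =>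
    ⟨div_nonneg (mul_nonneg hw (hV i).1) (by have := (hV i).1; positivity),
      mul_div_sum_add_le hV hL hw hδ i⟩
  have hr_sum : ∑ i, r i ∈ Icc (w - δ * w) w := sum_mul_div_sum_add_mem_Icc hV hL hw hδ
  obtain ⟨ht1, ht2⟩ := abs_le.1 ht
  obtain ⟨i₀, -, -⟩ := exists_ne_zero_of_sum_ne_zero hL.ne'
  have hδ0 : 0 ≤ δ := (hr i₀).1.trans (hr i₀).2
  have ha : ∀ i ∈ Finset.univ, (t - 1) * r i ∈ Icc (-1 : ℝ) 0 := fun i _ => by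
    obtain ⟨hr0, hrδ⟩ := hr i
    exact ⟨by nlinarith [mul_nonneg (show 0 ≤ t + 1 by linarith) hr0],
      mul_nonpos_of_nonpos_of_nonneg (by linarith) hr0⟩
  have hsq : ∑ i, ((t - 1) * r i) ^ 2 ≤ 4 * δ * w := by
    calc ∑ i, ((t - 1) * r i) ^ 2 ≤ ∑ i, 4 * δ * r i :=
          sum_le_sum fun i _ => by
            obtain ⟨hr0, hrδ⟩ := hr i
            have : (t - 1) ^ 2 ≤ 4 := by nlinarith
            calc ((t - 1) * r i) ^ 2 = (t - 1) ^ 2 * (r i * r i) := by ring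
              _ ≤ 4 * (δ * r i) := by gcongr
              _ = 4 * δ * r i := by ring
      _ ≤ 4 * δ * w := by
          rw [← mul_sum]
          exact mul_le_mul_of_nonneg_left hr_sum.2 (by positivity)
  have hexp : |exp (∑ i, (t - 1) * r i) - exp ((t - 1) * w)| ≤ 2 * δ * w := by
    refine (abs_exp_sub_exp_le_of_nonpos (sum_nonpos fun i hi => (ha i hi).2)
      (mul_nonpos_of_nonpos_of_nonneg (by linarith) hw)).trans ?_
    rw [← mul_sum, ← mul_sub, abs_mul]
    have hgap : |∑ i, r i - w| ≤ δ * w :=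
      abs_le.2 ⟨by linarith [hr_sum.1], by linarith [hr_sum.2, mul_nonneg hδ0 hw]⟩
    have ht' : |t - 1| ≤ 2 := abs_le.2 ⟨by linarith, by linarith⟩
    nlinarith [abs_nonneg (∑ i, r i - w), abs_nonneg (t - 1)]
  rw [condPGF_eq_prod hL (fun i => (hV i).1) hw t]
  calc |∏ i, (1 + (t - 1) * r i) - exp ((t - 1) * w)|
      ≤ |∏ i, (1 + (t - 1) * r i) - exp (∑ i, (t - 1) * r i)|
        + |exp (∑ i, (t - 1) * r i) - exp ((t - 1) * w)| := abs_sub_le _ _ _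
    _ ≤ 4 * δ * w + 2 * δ * w :=
        add_le_add ((abs_prod_one_add_sub_exp_sum_le _ ha).trans hsq) hexp
    _ = 6 * w * δ := by ring
end PGFWeights

section BoundedMoments

variable {Ω : Type*} [MeasurableSpace Ω] {μ : Measure Ω} [IsFiniteMeasure μ]

lemma memLp_of_ae_mem_Icc {X : Ω → ℝ} {c : ℝ} (hXm : AEStronglyMeasurable X μ)
    (hX : ∀ᵐ ω ∂μ, X ω ∈ Icc 0 c) (p : ENNReal) : MemLp X p μ :=
  MemLp.of_bound hXm c <| hX.mono fun ω h => by rw [Real.norm_eq_abs, abs_of_nonneg h.1]; exact h.2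

end BoundedMoments

section Concentration

variable {Ω : Type*} [MeasurableSpace Ω] {μ : Measure Ω} [IsProbabilityMeasure μ]

lemma variance_le_mul_integral_of_ae_mem_Icc {X : Ω → ℝ} {c : ℝ}
    (hXm : AEStronglyMeasurable X μ) (hX : ∀ᵐ ω ∂μ, X ω ∈ Icc 0 c) :
    variance X μ ≤ c * μ[X] := by
  have hint : Integrable X μ := (memLp_of_ae_mem_Icc hXm hX 1).integrable le_rfl
  calc variance X μ ≤ μ[X ^ 2] := variance_le_expectation_sq hXm
    _ ≤ ∫ ω, c * X ω ∂μ :=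
        integral_mono_ae (f := X ^ 2) (memLp_of_ae_mem_Icc hXm hX 2).integrable_sq
          (hint.const_mul c) (hX.mono fun ω h => by
            simp only [Pi.pow_apply]; nlinarith [h.1, h.2])
    _ = c * μ[X] := integral_const_mul _ _

lemma measure_sum_le_half_integral_le {ι : Type*} [Fintype ι] {X : ι → Ω → ℝ} {c : ℝ}
    (hXm : ∀ i, AEStronglyMeasurable (X i) μ) (hindep : iIndepFun X μ)
    (hX : ∀ i, ∀ᵐ ω ∂μ, X i ω ∈ Icc 0 c) (hpos : 0 < ∫ ω, ∑ i, X i ω ∂μ) :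
    μ {ω | ∑ i, X i ω ≤ (∫ ω, ∑ i, X i ω ∂μ) / 2}
      ≤ ENNReal.ofReal (4 * c / ∫ ω, ∑ i, X i ω ∂μ) := by
  set m := ∫ ω, ∑ i, X i ω ∂μ
  have hL2 : ∀ i, MemLp (X i) 2 μ := fun i => memLp_of_ae_mem_Icc (hXm i) (hX i) 2
  have hm : μ[∑ i, X i] = m := by simp only [m, Finset.sum_apply]
  have hm_sum : m = ∑ i, μ[X i] :=
    integral_finsetSum _ fun i _ => (hL2 i).integrable one_le_two
  have hvar : variance (∑ i, X i) μ ≤ c * m := by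
    rw [IndepFun.variance_sum (fun i _ => hL2 i) fun i _ j _ hij => hindep.indepFun hij]
    calc ∑ i, variance (X i) μ ≤ ∑ i, c * μ[X i] :=
          sum_le_sum fun i _ => variance_le_mul_integral_of_ae_mem_Icc (hXm i) (hX i)
      _ = c * m := by rw [← mul_sum, hm_sum]
  calc μ {ω | ∑ i, X i ω ≤ m / 2}
      ≤ μ {ω | m / 2 ≤ |(∑ i, X i) ω - μ[∑ i, X i]|} := measure_mono fun ω hω => by
        simp only [Set.mem_ofPred_eq, Finset.sum_apply] at hω ⊢
        rw [abs_sub_comm, abs_of_pos (by linarith)]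
        linarith
    _ ≤ ENNReal.ofReal (variance (∑ i, X i) μ / (m / 2) ^ 2) :=
        meas_ge_le_variance_div_sq (memLp_finsetSum' _ fun i _ => hL2 i) (by positivity)
    _ ≤ ENNReal.ofReal (4 * c / m) := by
        refine ENNReal.ofReal_le_ofReal ?_
        calc variance (∑ i, X i) μ / (m / 2) ^ 2 ≤ c * m / (m / 2) ^ 2 := by gcongr
          _ = 4 * c / m := by field_simp; ring

lemma measure_abs_condPGF_sub_exp_ge_le {ι : Type*} [Fintype ι] {X : ι → Ω → ℝ}
    {c w t δ ε : ℝ}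
    (hXm : ∀ i, AEStronglyMeasurable (X i) μ) (hindep : iIndepFun X μ)
    (hX : ∀ i, ∀ᵐ ω ∂μ, X i ω ∈ Icc 0 c) (hpos : 0 < ∫ ω, ∑ i, X i ω ∂μ)
    (hw : 0 ≤ w) (ht : |t| ≤ 1) (hδ0 : 0 ≤ δ)
    (hδ : 2 * w * (1 + c) ≤ δ * ∫ ω, ∑ i, X i ω ∂μ)
    (hδ_le : δ ≤ 1 / 2) (hε : 6 * w * δ < ε) :
    μ {ω | ε ≤ |condPGF (fun i => X i ω) w t - exp ((t - 1) * w)|}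
      ≤ ENNReal.ofReal (4 * c / ∫ ω, ∑ i, X i ω ∂μ) := by
  refine (measure_mono_ae ?_).trans (measure_sum_le_half_integral_le hXm hindep hX hpos)
  filter_upwards [ae_all_iff.2 hX] with ω hω hbad
  by_contra hsmall
  have hlarge : (∫ ω, ∑ i, X i ω ∂μ) / 2 < ∑ i, X i ω := not_le.1 hsmall
  have hclose := abs_condPGF_sub_exp_le hω (by linarith) hw ht
    (by nlinarith [mul_le_mul_of_nonneg_left hlarge.le hδ0]) hδ_le
  exact absurd (hclose.trans_lt hε) (not_lt.2 hbad)

theorem tendsto_measure_abs_condPGF_sub_exp_ge {ι : ℕ → Type*} [∀ n, Fintype (ι n)]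
    {X : (n : ℕ) → ι n → Ω → ℝ} {C : ℕ → ℝ}
    (hXm : ∀ n i, AEStronglyMeasurable (X n i) μ) (hindep : ∀ n, iIndepFun (X n) μ)
    (hX : ∀ n i, ∀ᵐ ω ∂μ, X n i ω ∈ Icc 0 (C n)) (hC : ∀ᶠ n in atTop, 1 ≤ C n)
    (hmass : Tendsto (fun n => (∫ ω, ∑ i, X n i ω ∂μ) / C n) atTop atTop)
    {w : ℝ} (hw : 0 < w) {t : ℝ} (ht : |t| ≤ 1) {ε : ℝ} (hε : 0 < ε) :
    Tendsto (fun n => μ {ω | ε ≤ |condPGF (fun i => X n i ω) w t - exp ((t - 1) * w)|})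
      atTop (nhds 0) := by
  set δ := min (1 / 2) (ε / (12 * w))
  have hδ0 : 0 < δ := lt_min (by norm_num) (by positivity)
  have hδε : 6 * w * δ < ε :=
    calc 6 * w * δ ≤ 6 * w * (ε / (12 * w)) := by gcongr; exact min_le_right _ _
      _ = ε / 2 := by field_simp; ring
      _ < ε := by linarith
  have hbound : Tendsto (fun n => ENNReal.ofReal (4 * C n / ∫ ω, ∑ i, X n i ω ∂μ))
      atTop (nhds 0) := by
    rw [← ENNReal.ofReal_zero]
    refine ENNReal.tendsto_ofReal ?_
    simpa [inv_div, mul_div_assoc] using hmass.inv_tendsto_atTop.const_mul 4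
  refine tendsto_of_tendsto_of_tendsto_of_le_of_le' tendsto_const_nhds hbound
    (Eventually.of_forall fun _ => zero_le) ?_
  filter_upwards [hC, hmass.eventually_ge_atTop (4 * w / δ)] with n hCn hmn
  rw [div_le_div_iff₀ hδ0 (by linarith)] at hmn
  have hm : 0 < ∫ ω, ∑ i, X n i ω ∂μ := by nlinarith
  exact measure_abs_condPGF_sub_exp_ge_le (hXm n) (hindep n) (hX n) hm hw.le ht hδ0.le
    (by nlinarith) (min_le_left _ _) hδε

end Concentration

section TruncatedBFRY

variable {α : ℝ}

lemma bfry_integrand_nonneg (α : ℝ) {u : ℝ} (hu : 0 ≤ u) :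
    0 ≤ u ^ (-α - 1) * (1 - exp (-u)) :=
  mul_nonneg (rpow_nonneg hu _) (sub_nonneg.2 (exp_le_one_iff.2 (neg_nonpos.2 hu)))

lemma bfry_integrand_le_rpow_neg {u : ℝ} (hu : 0 < u) :
    u ^ (-α - 1) * (1 - exp (-u)) ≤ u ^ (-α) :=
  calc u ^ (-α - 1) * (1 - exp (-u)) ≤ u ^ (-α - 1) * u :=
        mul_le_mul_of_nonneg_left (by linarith [add_one_le_exp (-u)]) (rpow_nonneg hu.le _)
    _ = u ^ (-α) := by rw [← rpow_add_one hu.ne']; ring_nf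

lemma bfry_integrand_le_rpow_neg_sub_one {u : ℝ} (hu : 0 ≤ u) :
    u ^ (-α - 1) * (1 - exp (-u)) ≤ u ^ (-α - 1) :=
  mul_le_of_le_one_right (rpow_nonneg hu _) (by linarith [exp_pos (-u)])

lemma integrableOn_bfry_integrand (hα1 : α < 1) {Cb : ℝ} (hCb : 0 ≤ Cb) :
    IntegrableOn (fun u => u ^ (-α - 1) * (1 - exp (-u))) (Ioc 0 Cb) := by
  have hdom : IntegrableOn (fun u : ℝ => u ^ (-α)) (Ioc 0 Cb) := by
    rw [← intervalIntegrable_iff_integrableOn_Ioc_of_le hCb]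
    exact intervalIntegral.intervalIntegrable_rpow' (by linarith)
  refine hdom.mono' (by fun_prop) ?_
  filter_upwards [ae_restrict_mem measurableSet_Ioc] with u hu
  rw [Real.norm_eq_abs, abs_of_nonneg (bfry_integrand_nonneg α hu.1.le)]
  exact bfry_integrand_le_rpow_neg hu.1

lemma integral_bfry_integrand_le (hα0 : 0 < α) (hα1 : α < 1) {Cb : ℝ} (hCb : 1 ≤ Cb) :
    ∫ u in Ioc 0 Cb, u ^ (-α - 1) * (1 - exp (-u)) ≤ (1 - α)⁻¹ + α⁻¹ := by
  have hint := integrableOn_bfry_integrand hα1 (zero_le_one.trans hCb)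
  rw [← Ioc_union_Ioc_eq_Ioc zero_le_one hCb, setIntegral_union (Ioc_disjoint_Ioc_of_le le_rfl)
    measurableSet_Ioc (hint.mono_set (Ioc_subset_Ioc_right hCb))
    (hint.mono_set (Ioc_subset_Ioc_left zero_le_one))]
  have hnear : ∫ u in Ioc 0 1, u ^ (-α - 1) * (1 - exp (-u)) ≤ (1 - α)⁻¹ :=
    calc ∫ u in Ioc 0 1, u ^ (-α - 1) * (1 - exp (-u)) ≤ ∫ u in Ioc 0 1, u ^ (-α) :=
          setIntegral_mono_on (hint.mono_set (Ioc_subset_Ioc_right hCb))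
            (by rw [← intervalIntegrable_iff_integrableOn_Ioc_of_le zero_le_one]
                exact intervalIntegral.intervalIntegrable_rpow' (by linarith))
            measurableSet_Ioc fun u hu => bfry_integrand_le_rpow_neg hu.1
      _ = (1 - α)⁻¹ := by
          rw [← intervalIntegral.integral_of_le zero_le_one, integral_rpow (Or.inl (by linarith)),
            one_rpow, zero_rpow (by linarith)]
          ring
  have hfar : ∫ u in Ioc 1 Cb, u ^ (-α - 1) * (1 - exp (-u)) ≤ α⁻¹ := by
    have h0 : (0 : ℝ) ∉ uIcc 1 Cb := by rw [uIcc_of_le hCb]; simp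
    calc ∫ u in Ioc 1 Cb, u ^ (-α - 1) * (1 - exp (-u)) ≤ ∫ u in Ioc 1 Cb, u ^ (-α - 1) :=
          setIntegral_mono_on (hint.mono_set (Ioc_subset_Ioc_left zero_le_one))
            (by rw [← intervalIntegrable_iff_integrableOn_Ioc_of_le hCb]
                exact intervalIntegral.intervalIntegrable_rpow (Or.inr h0))
            measurableSet_Ioc fun u hu => bfry_integrand_le_rpow_neg_sub_one (by linarith [hu.1])
      _ = (1 - Cb ^ (-α)) / α := by
          rw [← intervalIntegral.integral_of_le hCb,
            integral_rpow (Or.inr ⟨by intro h; linarith, h0⟩), one_rpow,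
            show -α - 1 + 1 = -α by ring]
          field_simp
          ring
      _ ≤ α⁻¹ := by
          rw [div_le_iff₀ hα0, inv_mul_cancel₀ hα0.ne']
          linarith [rpow_nonneg (zero_le_one.trans hCb) (-α)]
  linarith

lemma rpow_mul_le_bfry_integrand (hα : -1 ≤ α) {Cb u : ℝ} (hCb : 2 ≤ Cb)
    (hu : u ∈ Ioc (Cb / 2) Cb) :
    Cb ^ (-α - 1) * (1 - exp (-1)) ≤ u ^ (-α - 1) * (1 - exp (-u)) := by
  have hu1 : 1 ≤ u := by linarith [hu.1]
  exact mul_le_mul (rpow_le_rpow_of_nonpos (by linarith) hu.2 (by linarith))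
    (by gcongr) (sub_nonneg.2 (exp_le_one_iff.2 (by norm_num)))
    (rpow_nonneg (by linarith) _)

lemma integral_bfry_integrand_pos (hα : -1 ≤ α) (hα1 : α < 1) {Cb : ℝ} (hCb : 2 ≤ Cb) :
    0 < ∫ u in Ioc 0 Cb, u ^ (-α - 1) * (1 - exp (-u)) := by
  have hint := integrableOn_bfry_integrand hα1 (by linarith : (0 : ℝ) ≤ Cb)
  have hsub : Ioc (Cb / 2) Cb ⊆ Ioc 0 Cb := Ioc_subset_Ioc_left (by linarith)
  calc 0 < Cb ^ (-α - 1) * (1 - exp (-1)) * volume.real (Ioc (Cb / 2) Cb) := by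
        rw [Real.volume_real_Ioc_of_le (by linarith)]
        exact mul_pos (mul_pos (rpow_pos_of_pos (by linarith) _)
          (sub_pos.2 (exp_lt_one_iff.2 (by norm_num)))) (by linarith)
    _ ≤ ∫ u in Ioc (Cb / 2) Cb, u ^ (-α - 1) * (1 - exp (-u)) :=
        setIntegral_ge_of_const_le_real measurableSet_Ioc measure_Ioc_lt_top.ne
          (fun u hu => rpow_mul_le_bfry_integrand hα hCb hu) (hint.mono_set hsub)
    _ ≤ ∫ u in Ioc 0 Cb, u ^ (-α - 1) * (1 - exp (-u)) :=
        setIntegral_mono_set hint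
          ((ae_restrict_mem measurableSet_Ioc).mono fun u hu => bfry_integrand_nonneg α hu.1.le)
          hsub.eventuallyLE

lemma le_truncBFRY_Ioc (hα0 : 0 < α) (hα1 : α < 1) {Cb : ℝ} (hCb : 2 ≤ Cb) :
    ENNReal.ofReal (((1 - α)⁻¹ + α⁻¹)⁻¹ * (1 - exp (-1)) / 2 * Cb ^ (-α))
      ≤ truncBFRY α Cb (Ioc (Cb / 2) Cb) := by
  have hCb0 : 0 < Cb := by linarith
  set Z := ∫ u in Ioc 0 Cb, u ^ (-α - 1) * (1 - exp (-u))
  have hZ : 0 < Z := integral_bfry_integrand_pos (by linarith) hα1 hCb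
  have hZ_le : Z ≤ (1 - α)⁻¹ + α⁻¹ := integral_bfry_integrand_le hα0 hα1 (by linarith)
  set b := ((1 - α)⁻¹ + α⁻¹)⁻¹ * Cb ^ (-α - 1) * (1 - exp (-1))
  have hb : 0 ≤ b := by
    have := exp_le_one_iff.2 (show (-1 : ℝ) ≤ 0 by norm_num)
    have : 0 ≤ (1 - α)⁻¹ := inv_nonneg.2 (sub_nonneg.2 hα1.le)
    have : 0 ≤ Cb ^ (-α - 1) := rpow_nonneg hCb0.le _
    positivity
  have hmass :
      ((1 - α)⁻¹ + α⁻¹)⁻¹ * (1 - exp (-1)) / 2 * Cb ^ (-α) = b * (Cb - Cb / 2) := by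
    rw [show -α = -α - 1 + 1 by ring, rpow_add_one hCb0.ne']
    ring
  rw [hmass, truncBFRY, withDensity_apply _ measurableSet_Ioc, ENNReal.ofReal_mul hb,
    ← Real.volume_Ioc, ← setLIntegral_const]
  refine setLIntegral_mono' measurableSet_Ioc fun u hu => ENNReal.ofReal_le_ofReal ?_
  rw [indicator_of_mem (Ioc_subset_Ioc_left (by positivity) hu), mul_assoc]
  have hlow := rpow_mul_le_bfry_integrand (α := α) (by linarith) hCb hu
  calc b = ((1 - α)⁻¹ + α⁻¹)⁻¹ * (Cb ^ (-α - 1) * (1 - exp (-1))) := mul_assoc _ _ _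
    _ ≤ Z⁻¹ * (u ^ (-α - 1) * (1 - exp (-u))) :=
        mul_le_mul (inv_anti₀ hZ hZ_le) hlow
          (mul_nonneg (rpow_nonneg hCb0.le _) (sub_nonneg.2 (exp_le_one_iff.2 (by norm_num))))
          (inv_nonneg.2 hZ.le)

lemma truncBFRY_compl_Ioc_eq_zero (α Cb : ℝ) : truncBFRY α Cb (Ioc 0 Cb)ᶜ = 0 := by
  rw [truncBFRY, withDensity_apply _ measurableSet_Ioc.compl,
    setLIntegral_congr_fun measurableSet_Ioc.compl fun u hu => by
      rw [indicator_of_notMem hu, ENNReal.ofReal_zero]]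
  simp

end TruncatedBFRY

section TruncatedBFRYLaw

variable {Ω : Type*} [MeasurableSpace Ω] {μ : Measure Ω} {α : ℝ}

lemma ae_mem_Ioc_of_map_eq_truncBFRY {Cb : ℝ} {X : Ω → ℝ} (hX : AEMeasurable X μ)
    (hlaw : μ.map X = truncBFRY α Cb) : ∀ᵐ ω ∂μ, X ω ∈ Ioc 0 Cb :=
  ae_of_ae_map hX (hlaw ▸ ae_iff.2 (truncBFRY_compl_Ioc_eq_zero α Cb))

lemma exists_pos_mul_rpow_le_integral_of_map_eq_truncBFRY [IsFiniteMeasure μ]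
    (hα0 : 0 < α) (hα1 : α < 1) :
    ∃ c > 0, ∀ {Cb : ℝ}, 2 ≤ Cb → ∀ {X : Ω → ℝ}, AEMeasurable X μ →
      μ.map X = truncBFRY α Cb → c * Cb ^ (1 - α) ≤ μ[X] := by
  set K := ((1 - α)⁻¹ + α⁻¹)⁻¹ * (1 - exp (-1))
  have hK : 0 < K := mul_pos (inv_pos.2 (add_pos (inv_pos.2 (by linarith)) (inv_pos.2 hα0)))
    (sub_pos.2 (exp_lt_one_iff.2 (by norm_num)))
  refine ⟨K / 4, by positivity, fun {Cb} hCb {X} hX hlaw => ?_⟩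
  have hCb0 : 0 < Cb := by linarith
  have hIoc := ae_mem_Ioc_of_map_eq_truncBFRY hX hlaw
  have hint : Integrable X μ := (memLp_of_ae_mem_Icc hX.aestronglyMeasurable
    (hIoc.mono fun _ h => Ioc_subset_Icc_self h) 1).integrable le_rfl
  have htail : K / 2 * Cb ^ (-α) ≤ μ.real {ω | Cb / 2 ≤ X ω} := by
    have hP : ENNReal.ofReal (K / 2 * Cb ^ (-α)) ≤ μ.map X (Ioc (Cb / 2) Cb) :=
      hlaw ▸ le_truncBFRY_Ioc hα0 hα1 hCb
    rw [Measure.map_apply_of_aemeasurable hX measurableSet_Ioc] at hP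
    exact ((ENNReal.ofReal_le_iff_le_toReal (measure_ne_top _ _)).1 hP).trans
      (measureReal_mono fun ω hω => hω.1.le)
  calc K / 4 * Cb ^ (1 - α) = Cb / 2 * (K / 2 * Cb ^ (-α)) := by
        rw [sub_eq_add_neg, rpow_add hCb0, rpow_one]; ring
    _ ≤ Cb / 2 * μ.real {ω | Cb / 2 ≤ X ω} := by gcongr
    _ ≤ μ[X] := mul_meas_ge_le_integral_of_nonneg (hIoc.mono fun _ h => h.1.le) hint _

lemma tendsto_integral_sum_div_atTop_of_map_eq_truncBFRY [IsFiniteMeasure μ]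
    (hα0 : 0 < α) (hα1 : α < 1) {C : ℕ → ℝ} (hC : Tendsto C atTop atTop)
    (hCn : Tendsto (fun n => C n ^ α / (n : ℝ)) atTop (nhds 0))
    {W : (n : ℕ) → Fin (n - 1) → Ω → ℝ} (hW : ∀ n i, AEMeasurable (W n i) μ)
    (hlaw : ∀ n i, μ.map (W n i) = truncBFRY α (C n)) :
    Tendsto (fun n => (∫ ω, ∑ i, W n i ω ∂μ) / C n) atTop atTop := by
  obtain ⟨c, hc, hmean⟩ :=
    exists_pos_mul_rpow_le_integral_of_map_eq_truncBFRY (μ := μ) hα0 hα1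
  have hratio : Tendsto (fun n : ℕ => (n : ℝ) / C n ^ α) atTop atTop := by
    have hpos : ∀ᶠ n : ℕ in atTop, C n ^ α / n ∈ Set.Ioi 0 := by
      filter_upwards [hC.eventually_gt_atTop 0, eventually_gt_atTop 0] with n hCn hn
      exact div_pos (rpow_pos_of_pos hCn _) (Nat.cast_pos.2 hn)
    refine ((tendsto_nhdsWithin_iff.2 ⟨hCn, hpos⟩).inv_tendsto_nhdsGT_zero).congr fun n => ?_
    simp only [Pi.inv_apply, inv_div]
  refine tendsto_atTop_mono' _ ?_ (hratio.const_mul_atTop (half_pos hc))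
  filter_upwards [hC.eventually_ge_atTop 2, eventually_ge_atTop 2] with n hCn hn
  have hC0 : 0 < C n := by linarith
  have hint : ∀ i, Integrable (W n i) μ := fun i =>
    (memLp_of_ae_mem_Icc (hW n i).aestronglyMeasurable ((ae_mem_Ioc_of_map_eq_truncBFRY
      (hW n i) (hlaw n i)).mono fun _ h => Ioc_subset_Icc_self h) 1).integrable le_rfl
  have hsum : ((n - 1 : ℕ) : ℝ) * (c * C n ^ (1 - α)) ≤ ∫ ω, ∑ i, W n i ω ∂μ := by
    rw [integral_finsetSum _ fun i _ => hint i]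
    calc ((n - 1 : ℕ) : ℝ) * (c * C n ^ (1 - α))
          = ∑ _i : Fin (n - 1), c * C n ^ (1 - α) := by simp
      _ ≤ ∑ i, ∫ ω, W n i ω ∂μ := sum_le_sum fun i _ => hmean hCn (hW n i) (hlaw n i)
  have hcast : (n : ℝ) / 2 ≤ ((n - 1 : ℕ) : ℝ) := by
    have : (2 : ℝ) ≤ n := by exact_mod_cast hn
    rw [Nat.cast_sub (by omega)]
    push_cast
    linarith
  rw [le_div_iff₀ hC0]
  calc c / 2 * (n / C n ^ α) * C n = n / 2 * (c * (C n / C n ^ α)) := by ring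
    _ ≤ ((n - 1 : ℕ) : ℝ) * (c * C n ^ (1 - α)) := by
        rw [rpow_sub hC0, rpow_one]
        gcongr
    _ ≤ ∫ ω, ∑ i, W n i ω ∂μ := hsum

end TruncatedBFRYLaw

theorem conditional_pgf_tendsto_poisson_general (α : ℝ) (hα0 : 0 < α) (hα1 : α < 1)
    (C : ℕ → ℝ)
    (hC : Tendsto C atTop atTop)
    (hCn : Tendsto (fun n => C n ^ α / (n : ℝ)) atTop (nhds 0))
    {Ω : Type*} [MeasureSpace Ω] [IsProbabilityMeasure (volume : Measure Ω)]
    (W : (n : ℕ) → Fin (n - 1) → Ω → ℝ)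
    (hmeas : ∀ n i, Measurable (W n i))
    (hindep : ∀ n, iIndepFun (W n) volume)
    (hlaw : ∀ n i, Measure.map (W n i) volume = truncBFRY α (C n))
    (w : ℝ) (hw : 0 < w) (t : ℝ) (ht : |t| ≤ 1) :
    ∀ ε > 0,
      Tendsto (fun n : ℕ => (volume : Measure Ω)
          {ω | ε ≤ |(∏ i : Fin (n - 1),
              ((∑ j : Fin (n - 1), W n j ω) + w + t * w * W n i ω)
                / ((∑ j : Fin (n - 1), W n j ω) + w + w * W n i ω))
            - Real.exp ((t - 1) * w)|})
        atTop (nhds 0) := by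
  intro ε hε
  have hbounded : ∀ n i, ∀ᵐ ω, W n i ω ∈ Icc 0 (C n) := fun n i =>
    (ae_mem_Ioc_of_map_eq_truncBFRY (hmeas n i).aemeasurable (hlaw n i)).mono
      fun _ h => Ioc_subset_Icc_self h
  exact tendsto_measure_abs_condPGF_sub_exp_ge (fun n i => (hmeas n i).aestronglyMeasurable)
    hindep hbounded (hC.eventually_ge_atTop 1)
    (tendsto_integral_sum_div_atTop_of_map_eq_truncBFRY hα0 hα1 hC hCn
      (fun n i => (hmeas n i).aemeasurable) hlaw) hw ht hε

/-- Convergence of the conditional degree PGF: with `W_{n,i}` i.i.d. truncated BFRY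
and `L_n = ∑ᵢ W_{n,i}`, for fixed `w > 0` and `|t| ≤ 1`, the product
`F_n(t;w) = ∏ᵢ (L_n+w+t·w·W_{n,i})/(L_n+w+w·W_{n,i})` converges in probability to
`exp{(t-1)w}` as `n → ∞`. -/
theorem conditional_pgf_tendsto_poisson (α : ℝ) (hα0 : 0 < α) (hα1 : α < 1)
    (C : ℕ → ℝ) (hCpos : ∀ n, 0 < C n)
    (hC : Tendsto C atTop atTop)
    (hCn : Tendsto (fun n => C n ^ α / (n : ℝ)) atTop (nhds 0))
    {Ω : Type*} [MeasureSpace Ω] [IsProbabilityMeasure (volume : Measure Ω)]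
    (W : (n : ℕ) → Fin (n - 1) → Ω → ℝ)
    (hmeas : ∀ n i, Measurable (W n i))
    (hindep : ∀ n, iIndepFun (W n) volume)
    (hlaw : ∀ n i, Measure.map (W n i) volume = truncBFRY α (C n))
    (w : ℝ) (hw : 0 < w) (t : ℝ) (ht : |t| ≤ 1) :
    ∀ ε > 0,
      Tendsto (fun n : ℕ => (volume : Measure Ω)
          {ω | ε ≤ |(∏ i : Fin (n - 1),
              ((∑ j : Fin (n - 1), W n j ω) + w + t * w * W n i ω)
                / ((∑ j : Fin (n - 1), W n j ω) + w + w * W n i ω))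
            - Real.exp ((t - 1) * w)|})
        atTop (nhds 0) :=
  conditional_pgf_tendsto_poisson_general α hα0 hα1 C hC hCn W hmeas hindep hlaw w hw t ht
end
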